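/- arXiv:2604.23898 — 2 statements merged into one kernel-verified Lean document; each statement's English description precedes it below -/
import Mathlib

section
/- Let {P_i} and {Q_j} be complete families of mutually orthogonal Hermitian projectors on ℂ^d and set E = (1/d)·∑_{i,j} Tr((P_i Q_j)²). Then 1/d ≤ E ≤ 1. -/
open Matrix
open scoped ComplexOrder

/-!
Upper bound: for star projections `P`, `Q` one has
`Tr (P Q) - Tr ((P Q)²) = Tr (Xᴴ X) ≥ 0` with `X = (1 - P) Q P`, and `∑_{i,j} Tr (P_i Q_j) = d`.

Lower bound: fix `j` and let `M = ∑_i P_i Q_j P_i` be the pinching of `Q_j` by the `P_i`.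
Then `Tr M = Tr Q_j` and, by orthogonality of the `P_i`, `Tr (M²) = ∑_i Tr ((P_i Q_j)²)`, so
Cauchy–Schwarz on the diagonal of `M` gives `(Tr Q_j)² ≤ d ∑_i Tr ((P_i Q_j)²)`.
Since `Tr Q_j` is the rank of `Q_j`, a natural number, `Tr Q_j ≤ (Tr Q_j)²`; summing over `j`
gives `d ≤ d ∑_{i,j} Tr ((P_i Q_j)²)`.
-/

namespace Matrix

variable {𝕜 n ι κ : Type*} [RCLike 𝕜] [Fintype n] [Fintype ι] [Fintype κ]

lemma trace_eq_finrank_range_of_isIdempotentElem {K : Type*} [Field K] [DecidableEq n]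
    {Q : Matrix n n K} (hQ : IsIdempotentElem Q) :
    trace Q = Module.finrank K (LinearMap.range Q.toLin') := by
  have hproj := (LinearMap.isProj_range_iff_isIdempotentElem Q.toLin').mpr
    (hQ.map Matrix.toLinAlgEquiv')
  rw [← trace_toLin'_eq, hproj.trace]

lemma re_trace_le_sq_of_isIdempotentElem [DecidableEq n] {Q : Matrix n n 𝕜}
    (hQ : IsIdempotentElem Q) : RCLike.re (trace Q) ≤ RCLike.re (trace Q) ^ 2 := by
  rw [trace_eq_finrank_range_of_isIdempotentElem hQ, RCLike.natCast_re]
  exact_mod_cast Nat.le_self_pow two_ne_zero _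

lemma re_trace_conjTranspose_mul_self_nonneg {m : Type*} [Fintype m] (A : Matrix m n 𝕜) :
    0 ≤ RCLike.re (trace (Aᴴ * A)) :=
  (RCLike.nonneg_iff.mp (posSemidef_conjTranspose_mul_self A).trace_nonneg).1

lemma re_trace_conjTranspose_mul_self (A : Matrix n n 𝕜) :
    RCLike.re (trace (Aᴴ * A)) = ∑ a, ∑ k, ‖A k a‖ ^ 2 := by
  simp only [trace, diag, mul_apply, conjTranspose_apply, RCLike.star_def, RCLike.conj_mul,
    map_sum]
  norm_cast

lemma re_trace_sq_le_card_mul_re_trace_conjTranspose_mul_self (A : Matrix n n 𝕜) :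
    RCLike.re (trace A) ^ 2 ≤ Fintype.card n * RCLike.re (trace (Aᴴ * A)) := by
  have hdiag (a : n) : RCLike.re (A a a) ^ 2 ≤ ∑ k, ‖A k a‖ ^ 2 :=
    calc RCLike.re (A a a) ^ 2 ≤ ‖A a a‖ ^ 2 := by
          simpa using pow_le_pow_left₀ (abs_nonneg _) (RCLike.abs_re_le_norm (A a a)) 2
      _ ≤ ∑ k, ‖A k a‖ ^ 2 :=
          Finset.single_le_sum (f := fun k => ‖A k a‖ ^ 2) (fun _ _ => by positivity)
            (Finset.mem_univ a)
  calc RCLike.re (trace A) ^ 2 = (∑ a, RCLike.re (A a a)) ^ 2 := by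
        simp only [trace, diag, map_sum]
    _ ≤ Fintype.card n * ∑ a, RCLike.re (A a a) ^ 2 := sq_sum_le_card_mul_sum_sq
    _ ≤ Fintype.card n * RCLike.re (trace (Aᴴ * A)) := by
        rw [re_trace_conjTranspose_mul_self]
        gcongr with a
        exact hdiag a

lemma trace_mul_sub_trace_mul_sq [DecidableEq n] {P Q : Matrix n n 𝕜} (hP : IsStarProjection P)
    (hQ : IsStarProjection Q) :
    trace (P * Q) - trace ((P * Q) ^ 2) = trace (((1 - P) * Q * P)ᴴ * ((1 - P) * Q * P)) := by
  have hP2 : P * P = P := hP.isIdempotentElem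
  have hQ2 : Q * Q = Q := hQ.isIdempotentElem
  have hPh : Pᴴ = P := hP.isSelfAdjoint
  have hQh : Qᴴ = Q := hQ.isSelfAdjoint
  have h1P : (1 - P) * (1 - P) = 1 - P := hP.one_sub.isIdempotentElem
  have hPQ : trace (P * Q) = trace (P * Q * Q * P) := by
    rw [mul_assoc P Q, hQ2, trace_mul_cycle, hP2]
  have hPQPQ : trace ((P * Q) ^ 2) = trace (P * Q * P * Q * P) := by
    rw [trace_mul_comm, sq]
    simp only [← mul_assoc, hP2]
  have hX : ((1 - P) * Q * P)ᴴ * ((1 - P) * Q * P) = P * Q * ((1 - P) * (1 - P)) * Q * P := by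
    simp only [conjTranspose_mul, conjTranspose_sub, conjTranspose_one, hPh, hQh]
    noncomm_ring
  rw [hX, h1P, hPQ, hPQPQ, ← trace_sub]
  congr 1
  noncomm_ring

lemma re_trace_mul_sq_le_re_trace_mul [DecidableEq n] {P Q : Matrix n n 𝕜}
    (hP : IsStarProjection P) (hQ : IsStarProjection Q) :
    RCLike.re (trace ((P * Q) ^ 2)) ≤ RCLike.re (trace (P * Q)) := by
  have h := re_trace_conjTranspose_mul_self_nonneg ((1 - P) * Q * P)
  rw [← trace_mul_sub_trace_mul_sq hP hQ, map_sub] at h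
  linarith

lemma sum_sum_trace_mul_eq_card [DecidableEq n] {P : ι → Matrix n n 𝕜} {Q : κ → Matrix n n 𝕜}
    (hP : ∑ i, P i = 1) (hQ : ∑ j, Q j = 1) :
    ∑ i, ∑ j, trace (P i * Q j) = Fintype.card n := by
  simp only [← trace_sum, ← Finset.mul_sum, hP, hQ, mul_one, trace_one]

def pinching (P : ι → Matrix n n 𝕜) (A : Matrix n n 𝕜) : Matrix n n 𝕜 :=
  ∑ i, P i * A * P i

section pinching

variable {P : ι → Matrix n n 𝕜}

lemma isHermitian_pinching (hP : ∀ i, (P i).IsHermitian) {A : Matrix n n 𝕜}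
    (hA : A.IsHermitian) : (pinching P A).IsHermitian := by
  simp only [IsHermitian, pinching, conjTranspose_sum, conjTranspose_mul, (hP _).eq, hA.eq,
    mul_assoc]

lemma trace_pinching [DecidableEq n] (hP : ∀ i, IsIdempotentElem (P i)) (hsum : ∑ i, P i = 1)
    (A : Matrix n n 𝕜) : trace (pinching P A) = trace A := by
  calc trace (pinching P A) = ∑ i, trace (P i * A) := by
        simp only [pinching, trace_sum, trace_mul_cycle _ A, (hP _).eq]
    _ = trace A := by rw [← trace_sum, ← Finset.sum_mul, hsum, one_mul]

lemma trace_pinching_mul_self [DecidableEq n] [DecidableEq ι] (hP : ∀ i, IsIdempotentElem (P i))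
    (horth : ∀ i i', i ≠ i' → P i * P i' = 0) (A : Matrix n n 𝕜) :
    trace (pinching P A * pinching P A) = ∑ i, trace ((P i * A) ^ 2) := by
  have hblock (i i' : ι) : P i * A * P i * (P i' * A * P i') =
      if i = i' then P i * A * P i * A * P i else 0 := by
    split_ifs with h
    · subst h
      calc P i * A * P i * (P i * A * P i) = P i * A * (P i * P i) * A * P i := by noncomm_ring
        _ = _ := by rw [(hP i).eq]
    · calc P i * A * P i * (P i' * A * P i') = P i * A * (P i * P i') * A * P i' := by noncomm_ring
        _ = 0 := by rw [horth i i' h]; simp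
  simp only [pinching, Finset.sum_mul_sum, hblock, Finset.sum_ite_eq, Finset.mem_univ, if_true,
    trace_sum]
  refine Finset.sum_congr rfl fun i _ => ?_
  rw [trace_mul_comm, sq]
  simp only [← mul_assoc, (hP i).eq]

lemma re_trace_le_card_mul_sum_re_trace_mul_sq [DecidableEq n] [DecidableEq ι]
    (hP : ∀ i, IsStarProjection (P i)) (horth : ∀ i i', i ≠ i' → P i * P i' = 0)
    (hsum : ∑ i, P i = 1) {Q : Matrix n n 𝕜} (hQ : IsStarProjection Q) :
    RCLike.re (trace Q) ≤ Fintype.card n * ∑ i, RCLike.re (trace ((P i * Q) ^ 2)) := by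
  have hPidem (i : ι) : IsIdempotentElem (P i) := (hP i).isIdempotentElem
  have hM : (pinching P Q).IsHermitian :=
    isHermitian_pinching (fun i => (hP i).isSelfAdjoint) hQ.isSelfAdjoint
  calc RCLike.re (trace Q) ≤ RCLike.re (trace Q) ^ 2 :=
        re_trace_le_sq_of_isIdempotentElem hQ.isIdempotentElem
    _ = RCLike.re (trace (pinching P Q)) ^ 2 := by rw [trace_pinching hPidem hsum]
    _ ≤ Fintype.card n * RCLike.re (trace ((pinching P Q)ᴴ * pinching P Q)) :=
        re_trace_sq_le_card_mul_re_trace_conjTranspose_mul_self _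
    _ = Fintype.card n * ∑ i, RCLike.re (trace ((P i * Q) ^ 2)) := by
        rw [hM.eq, trace_pinching_mul_self hPidem horth, map_sum]

end pinching

lemma sum_sum_re_trace_mul_sq_le_card [DecidableEq n] {P : ι → Matrix n n 𝕜}
    {Q : κ → Matrix n n 𝕜} (hP : ∀ i, IsStarProjection (P i)) (hQ : ∀ j, IsStarProjection (Q j))
    (hPsum : ∑ i, P i = 1) (hQsum : ∑ j, Q j = 1) :
    ∑ i, ∑ j, RCLike.re (trace ((P i * Q j) ^ 2)) ≤ Fintype.card n :=
  calc ∑ i, ∑ j, RCLike.re (trace ((P i * Q j) ^ 2))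
      ≤ ∑ i, ∑ j, RCLike.re (trace (P i * Q j)) :=
        Finset.sum_le_sum fun i _ => Finset.sum_le_sum fun j _ =>
          re_trace_mul_sq_le_re_trace_mul (hP i) (hQ j)
    _ = Fintype.card n := by
        simp only [← map_sum, sum_sum_trace_mul_eq_card hPsum hQsum, RCLike.natCast_re]

lemma card_le_card_mul_sum_sum_re_trace_mul_sq [DecidableEq n] [DecidableEq ι]
    {P : ι → Matrix n n 𝕜} {Q : κ → Matrix n n 𝕜} (hP : ∀ i, IsStarProjection (P i))
    (hQ : ∀ j, IsStarProjection (Q j)) (hPorth : ∀ i i', i ≠ i' → P i * P i' = 0)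
    (hPsum : ∑ i, P i = 1) (hQsum : ∑ j, Q j = 1) :
    (Fintype.card n : ℝ) ≤ Fintype.card n * ∑ i, ∑ j, RCLike.re (trace ((P i * Q j) ^ 2)) :=
  calc (Fintype.card n : ℝ) = ∑ j, RCLike.re (trace (Q j)) := by
        rw [← map_sum, ← trace_sum, hQsum, trace_one, RCLike.natCast_re]
    _ ≤ ∑ j, Fintype.card n * ∑ i, RCLike.re (trace ((P i * Q j) ^ 2)) := by
        gcongr with j _
        exact re_trace_le_card_mul_sum_re_trace_mul_sq hP hPorth hPsum (hQ j)
    _ = Fintype.card n * ∑ i, ∑ j, RCLike.re (trace ((P i * Q j) ^ 2)) := by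
        rw [← Finset.mul_sum, Finset.sum_comm]

end Matrix

theorem E_bounds_general (d : ℕ) (hd : 0 < d) (ι κ : Type*) [Fintype ι] [Fintype κ]
    (P : ι → Matrix (Fin d) (Fin d) ℂ) (Q : κ → Matrix (Fin d) (Fin d) ℂ)
    (hP2 : ∀ i, P i * P i = P i) (hPh : ∀ i, (P i)ᴴ = P i)
    (hQ2 : ∀ j, Q j * Q j = Q j) (hQh : ∀ j, (Q j)ᴴ = Q j)
    (hPorth : ∀ i i', i ≠ i' → P i * P i' = 0)
    (hPsum : ∑ i, P i = 1) (hQsum : ∑ j, Q j = 1) :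
    1 / (d : ℝ) ≤ (∑ i, ∑ j, (Matrix.trace ((P i * Q j) ^ 2)).re) / (d : ℝ) ∧
    (∑ i, ∑ j, (Matrix.trace ((P i * Q j) ^ 2)).re) / (d : ℝ) ≤ 1 := by
  classical
  have hdR : (0 : ℝ) < d := Nat.cast_pos.mpr hd
  have hPproj (i : ι) : IsStarProjection (P i) := ⟨hP2 i, hPh i⟩
  have hQproj (j : κ) : IsStarProjection (Q j) := ⟨hQ2 j, hQh j⟩
  have hupper := sum_sum_re_trace_mul_sq_le_card hPproj hQproj hPsum hQsum
  have hlower := card_le_card_mul_sum_sum_re_trace_mul_sq hPproj hQproj hPorth hPsum hQsum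
  simp only [RCLike.re_to_complex, Fintype.card_fin] at hupper hlower
  exact ⟨div_le_div_of_nonneg_right (le_of_mul_le_mul_left (by simpa using hlower) hdR) hdR.le,
    div_le_one_of_le₀ hupper hdR.le⟩

/-- For complete families of mutually orthogonal Hermitian projectors on `ℂ^d`,
the mutual information energy `E = (1/d) ∑_{i,j} Tr((P_i Q_j)²)` satisfies
`1/d ≤ E ≤ 1`. -/
theorem E_bounds (d : ℕ) (hd : 0 < d) (ι κ : Type*) [Fintype ι] [Fintype κ]
    (P : ι → Matrix (Fin d) (Fin d) ℂ) (Q : κ → Matrix (Fin d) (Fin d) ℂ)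
    (hP2 : ∀ i, P i * P i = P i) (hPh : ∀ i, (P i)ᴴ = P i)
    (hQ2 : ∀ j, Q j * Q j = Q j) (hQh : ∀ j, (Q j)ᴴ = Q j)
    (hPorth : ∀ i i', i ≠ i' → P i * P i' = 0)
    (hQorth : ∀ j j', j ≠ j' → Q j * Q j' = 0)
    (hPsum : ∑ i, P i = 1) (hQsum : ∑ j, Q j = 1) :
    1 / (d : ℝ) ≤ (∑ i, ∑ j, (Matrix.trace ((P i * Q j) ^ 2)).re) / (d : ℝ) ∧
    (∑ i, ∑ j, (Matrix.trace ((P i * Q j) ^ 2)).re) / (d : ℝ) ≤ 1 :=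
  E_bounds_general d hd ι κ P Q hP2 hPh hQ2 hQh hPorth hPsum hQsum
end

section
/- Coarse-graining non-increase: let {P_i} and {Q_j} be complete families of mutually orthogonal Hermitian projectors on ℂ^d, and fix distinct indices i₀ ≠ i₁. Let {P'_k} be the family obtained by replacing P_{i₀} and P_{i₁} with P_{i₀} + P_{i₁}. Then ∑_{k,j} Tr((P'_k Q_j)²) ≥ ∑_{i,j} Tr((P_i Q_j)²), with equality if and only if P_{i₀} Q_j P_{i₁} = 0 for every j. -/
/-!
Write `A j = P i₀ * Q j * P i₁`. Expanding the square, merging `P i₀` and `P i₁` adds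
`2 Tr(P i₀ Q j P i₁ Q j)` to the `j`-th term, and since both are Hermitian projectors and `Q j` is
Hermitian this cross term equals `Tr(A j (A j)ᴴ) = ‖A j‖²_HS ≥ 0`. The total gain is zero exactly
when every `A j` vanishes.
-/

open Matrix
open scoped ComplexOrder

namespace Matrix

variable {m n R 𝕜 : Type*} [Fintype m] [Fintype n]

theorem trace_add_sq [DecidableEq n] [CommSemiring R] (A B : Matrix n n R) :
    trace ((A + B) ^ 2) = trace (A ^ 2) + trace (B ^ 2) + 2 * trace (A * B) := by
  rw [sq, sq, sq, add_mul, mul_add, mul_add, trace_add, trace_add, trace_add, trace_mul_comm B A]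
  ring

theorem trace_mul_mul_mul_eq_trace_mul_conjTranspose [CommSemiring R] [StarRing R]
    {P P' Q : Matrix n n R} (hP : IsStarProjection P) (hP' : IsStarProjection P')
    (hQ : Q.IsHermitian) :
    trace (P * Q * (P' * Q)) = trace (P * Q * P' * (P * Q * P')ᴴ) := by
  have hPh : Pᴴ = P := hP.isSelfAdjoint
  have hP'h : P'ᴴ = P' := hP'.isSelfAdjoint
  have hPP (X : Matrix n n R) : P * (P * X) = P * X := by
    rw [← Matrix.mul_assoc, hP.isIdempotentElem.eq]
  have hP'P' (X : Matrix n n R) : P' * (P' * X) = P' * X := by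
    rw [← Matrix.mul_assoc, hP'.isIdempotentElem.eq]
  rw [conjTranspose_mul, conjTranspose_mul, hPh, hP'h, hQ.eq]
  simp only [Matrix.mul_assoc, hP'P']
  rw [show P * (Q * (P' * (Q * P))) = P * (Q * (P' * Q)) * P by simp only [Matrix.mul_assoc],
    trace_mul_comm _ P, hPP]

variable [RCLike 𝕜]

theorem re_trace_mul_conjTranspose_self_nonneg (A : Matrix m n 𝕜) :
    0 ≤ RCLike.re (A * Aᴴ).trace :=
  (RCLike.nonneg_iff.mp (posSemidef_self_mul_conjTranspose A).trace_nonneg).1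

theorem re_trace_mul_conjTranspose_self_eq_zero_iff (A : Matrix m n 𝕜) :
    RCLike.re (A * Aᴴ).trace = 0 ↔ A = 0 := by
  have him := (RCLike.nonneg_iff.mp (posSemidef_self_mul_conjTranspose A).trace_nonneg).2
  rw [← trace_mul_conjTranspose_self_eq_zero_iff, ← RCLike.re_add_im (trace _), him]
  simp

end Matrix

theorem coarse_graining_nonincrease_general (d : ℕ) (ι κ : Type*) [Fintype ι] [Fintype κ] [DecidableEq ι]
    (P : ι → Matrix (Fin d) (Fin d) ℂ) (Q : κ → Matrix (Fin d) (Fin d) ℂ)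
    (hP2 : ∀ i, P i * P i = P i) (hPh : ∀ i, (P i)ᴴ = P i)
    (hQh : ∀ j, (Q j)ᴴ = Q j)
    (i₀ i₁ : ι) (hne : i₀ ≠ i₁) :
    (∑ j, (Matrix.trace (((P i₀ + P i₁) * Q j) ^ 2)).re +
        ∑ i ∈ Finset.univ \ {i₀, i₁}, ∑ j, (Matrix.trace ((P i * Q j) ^ 2)).re ≥
      ∑ i, ∑ j, (Matrix.trace ((P i * Q j) ^ 2)).re) ∧
    ((∑ j, (Matrix.trace (((P i₀ + P i₁) * Q j) ^ 2)).re +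
        ∑ i ∈ Finset.univ \ {i₀, i₁}, ∑ j, (Matrix.trace ((P i * Q j) ^ 2)).re =
      ∑ i, ∑ j, (Matrix.trace ((P i * Q j) ^ 2)).re) ↔
      ∀ j, P i₀ * Q j * P i₁ = 0) := by
  set cross := ∑ j, (trace (P i₀ * Q j * P i₁ * (P i₀ * Q j * P i₁)ᴴ)).re
  have hmerge : ∑ j, (trace (((P i₀ + P i₁) * Q j) ^ 2)).re =
      ∑ j, (trace ((P i₀ * Q j) ^ 2)).re + ∑ j, (trace ((P i₁ * Q j) ^ 2)).re + 2 * cross := by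
    rw [Finset.mul_sum, ← Finset.sum_add_distrib, ← Finset.sum_add_distrib]
    refine Finset.sum_congr rfl fun j _ => ?_
    rw [add_mul, trace_add_sq, trace_mul_mul_mul_eq_trace_mul_conjTranspose
      ⟨hP2 i₀, hPh i₀⟩ ⟨hP2 i₁, hPh i₁⟩ (hQh j)]
    simp
  have hsplit : ∑ i, ∑ j, (trace ((P i * Q j) ^ 2)).re =
      ∑ j, (trace ((P i₀ * Q j) ^ 2)).re + ∑ j, (trace ((P i₁ * Q j) ^ 2)).re +
        ∑ i ∈ Finset.univ \ {i₀, i₁}, ∑ j, (trace ((P i * Q j) ^ 2)).re := by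
    rw [← Finset.sum_sdiff (Finset.subset_univ {i₀, i₁}), Finset.sum_pair hne]
    ring
  have hterm_nonneg (j : κ) : 0 ≤ (trace (P i₀ * Q j * P i₁ * (P i₀ * Q j * P i₁)ᴴ)).re :=
    re_trace_mul_conjTranspose_self_nonneg (P i₀ * Q j * P i₁)
  have hcross_nonneg : 0 ≤ cross := Finset.sum_nonneg fun j _ => hterm_nonneg j
  have hcross_eq_zero : cross = 0 ↔ ∀ j, P i₀ * Q j * P i₁ = 0 := by
    rw [Finset.sum_eq_zero_iff_of_nonneg fun j _ => hterm_nonneg j]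
    simp only [Finset.mem_univ, true_implies]
    exact forall_congr' fun j => re_trace_mul_conjTranspose_self_eq_zero_iff (P i₀ * Q j * P i₁)
  rw [hmerge, hsplit, ← hcross_eq_zero]
  constructor
  · linarith
  · constructor <;> intro h <;> linarith

/-- Coarse-graining non-increase: merging `P i₀` and `P i₁` into `P i₀ + P i₁` does not
decrease `∑ Tr((P' Q)²)`, with equality iff `P i₀ * Q j * P i₁ = 0` for every `j`. -/
theorem coarse_graining_nonincrease (d : ℕ) (ι κ : Type*) [Fintype ι] [Fintype κ] [DecidableEq ι]
    (P : ι → Matrix (Fin d) (Fin d) ℂ) (Q : κ → Matrix (Fin d) (Fin d) ℂ)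
    (hP2 : ∀ i, P i * P i = P i) (hPh : ∀ i, (P i)ᴴ = P i)
    (hQ2 : ∀ j, Q j * Q j = Q j) (hQh : ∀ j, (Q j)ᴴ = Q j)
    (hPorth : ∀ i i', i ≠ i' → P i * P i' = 0)
    (hQorth : ∀ j j', j ≠ j' → Q j * Q j' = 0)
    (hPsum : ∑ i, P i = 1) (hQsum : ∑ j, Q j = 1)
    (i₀ i₁ : ι) (hne : i₀ ≠ i₁) :
    (∑ j, (Matrix.trace (((P i₀ + P i₁) * Q j) ^ 2)).re +
        ∑ i ∈ Finset.univ \ {i₀, i₁}, ∑ j, (Matrix.trace ((P i * Q j) ^ 2)).re ≥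
      ∑ i, ∑ j, (Matrix.trace ((P i * Q j) ^ 2)).re) ∧
    ((∑ j, (Matrix.trace (((P i₀ + P i₁) * Q j) ^ 2)).re +
        ∑ i ∈ Finset.univ \ {i₀, i₁}, ∑ j, (Matrix.trace ((P i * Q j) ^ 2)).re =
      ∑ i, ∑ j, (Matrix.trace ((P i * Q j) ^ 2)).re) ↔
      ∀ j, P i₀ * Q j * P i₁ = 0) :=
  coarse_graining_nonincrease_general d ι κ P Q hP2 hPh hQh i₀ i₁ hne
end
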